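/- arXiv:2005.08311 — 2 statements merged into one kernel-verified Lean document; each statement's English description precedes it below -/
import Mathlib

section
/- If a holomorphic function $f$ on the open unit disc has power series $f(z) = \sum_{n=0}^\infty a_n z^n$, then $\int_{\mathbb{D}} |f|^2\, dA = \pi \sum_{n=0}^\infty \frac{|a_n|^2}{n+1}$ (with both sides possibly infinite). -/
open MeasureTheory Metric Complex

open Set Filter AddCircle
open scoped Real ENNReal InnerProductSpace

/-! On the circle of radius `r < 1`, `θ ↦ f (r e^{iθ})` has the absolutely convergent Fourier
series `∑ aₙ rⁿ e^{inθ}`, so Parseval's identity gives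
`∫_{-π}^{π} |f (r e^{iθ})|² dθ = 2π ∑ |aₙ|² r^{2n}`. Integrating against `r dr` in polar
coordinates and exchanging sum and integral by monotone convergence (everything lives in `[0, ∞]`),
`∫₀¹ r^{2n+1} dr = 1 / (2n + 2)` turns this into `π ∑ |aₙ|² / (n + 1)`. -/

theorem summable_norm_mul_pow_of_summable_mul_pow {𝕜 : Type*} [NormedDivisionRing 𝕜]
    {a : ℕ → 𝕜} {z : 𝕜} (h : Summable fun n => a n * z ^ n) {r : ℝ} (hr₀ : 0 ≤ r)
    (hr : r < ‖z‖) : Summable fun n => ‖a n‖ * r ^ n := by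
  have hz : 0 < ‖z‖ := hr₀.trans_lt hr
  obtain ⟨C, hC⟩ := h.tendsto_atTop_zero.norm.bddAbove_range
  refine .of_nonneg_of_le (fun n => by positivity) (fun n => ?_)
    ((summable_geometric_of_lt_one (by positivity) ((div_lt_one hz).mpr hr)).mul_left C)
  calc ‖a n‖ * r ^ n = ‖a n * z ^ n‖ * (r / ‖z‖) ^ n := by
        rw [norm_mul, norm_pow, div_pow, mul_assoc, mul_div_cancel₀ _ (by positivity)]
    _ ≤ C * (r / ‖z‖) ^ n := by gcongr; exact hC ⟨n, rfl⟩

theorem summable_norm_mul_pow_of_hasSum_on_ball {a : ℕ → ℂ} {f : ℂ → ℂ} {R : ℝ}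
    (hf : ∀ z ∈ ball (0 : ℂ) R, HasSum (fun n => a n * z ^ n) (f z)) {r : ℝ} (hr₀ : 0 ≤ r)
    (hr : r < R) : Summable fun n => ‖a n‖ * r ^ n := by
  have hz : ‖(((r + R) / 2 : ℝ) : ℂ)‖ = (r + R) / 2 := by
    rw [norm_real, Real.norm_eq_abs, abs_of_pos (by linarith)]
  exact summable_norm_mul_pow_of_summable_mul_pow
    (hf _ (mem_ball_zero_iff.mpr (by linarith))).summable hr₀ (by linarith)

theorem aemeasurable_of_hasSum {α : Type*} [MeasurableSpace α] {μ : Measure α}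
    {u : ℕ → α → ℂ} {F : α → ℂ} (hu : ∀ n, AEMeasurable (u n) μ)
    (h : ∀ᵐ x ∂μ, HasSum (fun n => u n x) (F x)) : AEMeasurable F μ :=
  aemeasurable_of_tendsto_metrizable_ae' (fun _ => Finset.aemeasurable_fun_sum _ fun n _ => hu n)
    (h.mono fun _ hx => hx.tendsto_sum_nat)

section Fourier

variable {T : ℝ} [Fact (0 < T)]

theorem fourierCoeff_eq_inner_fourierLp (F : C(AddCircle T, ℂ)) (n : ℤ) :
    fourierCoeff F n = ⟪fourierLp 2 n, ContinuousMap.toLp 2 haarAddCircle ℂ F⟫_ℂ := by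
  rw [← fourierCoeff_toLp, ← fourierBasis_repr, HilbertBasis.repr_apply_apply, coe_fourierBasis]

theorem hasSum_sq_norm_of_hasSum_fourier {ι : Type*} {k : ι → ℤ} (hk : k.Injective)
    {c : ι → ℂ} {F : C(AddCircle T, ℂ)} (hF : HasSum (fun i => c i • fourier (k i)) F) :
    HasSum (fun i => ‖c i‖ ^ 2) (∫ t, ‖F t‖ ^ 2 ∂haarAddCircle) := by
  have hcoeff (n : ℤ) : HasSum (fun i => if n = k i then c i else 0) (fourierCoeff F n) := by
    have := hF.mapL ((innerSL ℂ (fourierLp 2 n)).comp (ContinuousMap.toLp 2 haarAddCircle ℂ))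
    simpa [← fourierCoeff_eq_inner_fourierLp, inner_smul_right,
      orthonormal_iff_ite.mp orthonormal_fourier] using this
  have hcoeff_range (i : ι) : fourierCoeff F (k i) = c i :=
    (hcoeff (k i)).unique <| by
      simpa using hasSum_single (f := fun j => if k i = k j then c j else 0) i
        fun j hj => if_neg (hk.ne hj).symm
  have hcoeff_compl : ∀ n ∉ range k, fourierCoeff F n = 0 := fun n hn =>
    (hcoeff n).unique <| by
      convert hasSum_zero with i
      exact if_neg fun h => hn ⟨i, h.symm⟩
  have hparseval := hasSum_sq_fourierCoeff (ContinuousMap.toLp 2 haarAddCircle ℂ F)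
  simp_rw [fourierCoeff_toLp] at hparseval
  rw [integral_congr_ae ((ContinuousMap.coeFn_toLp haarAddCircle F).mono fun t ht => by
    rw [ht])] at hparseval
  have := (hk.hasSum_iff fun n hn => by simp [hcoeff_compl n hn]).mpr hparseval
  simpa [Function.comp_def, hcoeff_range] using this

end Fourier

theorem lintegral_norm_sq_of_hasSum_exp_mul_I {b : ℕ → ℂ} (hb : Summable fun n => ‖b n‖)
    {g : ℝ → ℂ} (hg : ∀ θ : ℝ, HasSum (fun n : ℕ => b n * exp (n * θ * I)) (g θ)) :
    ∫⁻ θ in Ioo (-π) π, ENNReal.ofReal (‖g θ‖ ^ 2) =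
      ENNReal.ofReal (2 * π) * ∑' n, ENNReal.ofReal (‖b n‖ ^ 2) := by
  have : Fact (0 < 2 * π) := ⟨Real.two_pi_pos⟩
  obtain ⟨F, hF⟩ : Summable fun n : ℕ => b n • fourier (T := 2 * π) n :=
    .of_norm (by simpa [norm_smul, fourier_norm] using hb)
  have hgF (θ : ℝ) : g θ = F θ := by
    refine (hg θ).unique <| ((ContinuousMap.evalCLM ℂ _).hasSum hF).congr_fun fun n => ?_
    rw [ContinuousMap.evalCLM_apply, ContinuousMap.smul_apply, fourier_coe_apply, smul_eq_mul]
    congr 2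
    field_simp
    push_cast
    ring
  have hparseval := hasSum_sq_norm_of_hasSum_fourier Nat.cast_injective hF
  have hint : Integrable (fun t => ‖F t‖ ^ 2) haarAddCircle :=
    (by fun_prop : Continuous fun t => ‖F t‖ ^ 2).integrable_of_hasCompactSupport
      (HasCompactSupport.of_compactSpace _)
  calc ∫⁻ θ in Ioo (-π) π, ENNReal.ofReal (‖g θ‖ ^ 2)
      = ∫⁻ θ in Ioc (-π) (-π + 2 * π), ENNReal.ofReal (‖F θ‖ ^ 2) := by
        rw [show -π + 2 * π = π by ring, Measure.restrict_congr_set Ioo_ae_eq_Ioc]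
        simp_rw [hgF]
    _ = ENNReal.ofReal (2 * π) * ∫⁻ t, ENNReal.ofReal (‖F t‖ ^ 2) ∂haarAddCircle := by
        rw [AddCircle.lintegral_preimage (2 * π) (-π) fun t => ENNReal.ofReal (‖F t‖ ^ 2),
          volume_eq_smul_haarAddCircle, lintegral_smul_measure, smul_eq_mul]
    _ = ENNReal.ofReal (2 * π) * ∑' n, ENNReal.ofReal (‖b n‖ ^ 2) := by
        rw [← ofReal_integral_eq_lintegral_ofReal hint (ae_of_all _ fun t => by positivity),
          ← hparseval.tsum_eq, ENNReal.ofReal_tsum_of_nonneg (fun n => by positivity)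
            hparseval.summable]

theorem Complex.polarCoord_symm_eq_ofReal_mul_exp (p : ℝ × ℝ) :
    Complex.polarCoord.symm p = p.1 * exp (p.2 * I) := by
  rw [Complex.polarCoord_symm_apply, exp_mul_I, ← ofReal_cos, ← ofReal_sin]

@[fun_prop]
theorem Complex.continuous_polarCoord_symm : Continuous Complex.polarCoord.symm := by
  rw [funext Complex.polarCoord_symm_eq_ofReal_mul_exp]
  fun_prop

theorem lintegral_norm_sq_polarCoord_symm_of_hasSum_pow {a : ℕ → ℂ} {f : ℂ → ℂ} {r : ℝ}
    (hr : 0 ≤ r) (ha : Summable fun n => ‖a n‖ * r ^ n)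
    (hf : ∀ z : ℂ, ‖z‖ = r → HasSum (fun n => a n * z ^ n) (f z)) :
    ∫⁻ θ in Ioo (-π) π, ENNReal.ofReal (‖f (Complex.polarCoord.symm (r, θ))‖ ^ 2) =
      ENNReal.ofReal (2 * π) * ∑' n, ENNReal.ofReal (‖a n‖ ^ 2 * r ^ (2 * n)) := by
  have hb : Summable fun n => ‖a n * (r : ℂ) ^ n‖ := by
    simpa [norm_mul, norm_pow, abs_of_nonneg hr] using ha
  refine (lintegral_norm_sq_of_hasSum_exp_mul_I hb fun θ => ?_).trans ?_
  · convert hf (Complex.polarCoord.symm (r, θ)) (by simp [abs_of_nonneg hr]) using 2 with n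
    rw [Complex.polarCoord_symm_eq_ofReal_mul_exp, mul_pow, ← exp_nat_mul]
    ring_nf
  · congr 2 with n
    rw [norm_mul, norm_pow, norm_real, Real.norm_eq_abs, abs_of_nonneg hr]
    congr 1
    ring

theorem lintegral_ball_zero_eq_lintegral_polarCoord (R : ℝ) (g : ℂ → ℝ≥0∞) :
    ∫⁻ z in ball (0 : ℂ) R, g z =
      ∫⁻ p in Ioo 0 R ×ˢ Ioo (-π) π, ENNReal.ofReal p.1 * g (Complex.polarCoord.symm p) := by
  have hS : MeasurableSet (Iio R ×ˢ (univ : Set ℝ)) := measurableSet_Iio.prod .univ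
  rw [← lintegral_indicator measurableSet_ball, ← Complex.lintegral_comp_polarCoord_symm,
    polarCoord_target]
  calc _ = ∫⁻ p in Ioi 0 ×ˢ Ioo (-π) π, (Iio R ×ˢ univ).indicator
        (fun p => ENNReal.ofReal p.1 * g (Complex.polarCoord.symm p)) p := by
        refine setLIntegral_congr_fun (measurableSet_Ioi.prod measurableSet_Ioo) fun p hp => ?_
        simp [indicator, abs_of_pos (mem_Ioi.mp hp.1)]
    _ = _ := by
      rw [lintegral_indicator hS, Measure.restrict_restrict hS, prod_inter_prod, Iio_inter_Ioi,
        univ_inter]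

theorem lintegral_ball_zero_eq_lintegral_lintegral_polarCoord {R : ℝ} {g : ℂ → ℝ≥0∞}
    (hg : AEMeasurable (g ∘ Complex.polarCoord.symm) (volume.restrict (Ioo 0 R ×ˢ Ioo (-π) π))) :
    ∫⁻ z in ball (0 : ℂ) R, g z = ∫⁻ r in Ioo 0 R,
      ENNReal.ofReal r * ∫⁻ θ in Ioo (-π) π, g (Complex.polarCoord.symm (r, θ)) := by
  rw [Measure.volume_eq_prod, ← Measure.prod_restrict] at hg
  have hmul : AEMeasurable (fun p : ℝ × ℝ => ENNReal.ofReal p.1 * g (Complex.polarCoord.symm p))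
      ((volume.restrict (Ioo 0 R)).prod (volume.restrict (Ioo (-π) π))) :=
    measurable_fst.ennreal_ofReal.aemeasurable.mul hg
  rw [lintegral_ball_zero_eq_lintegral_polarCoord, Measure.volume_eq_prod,
    ← Measure.prod_restrict, lintegral_prod _ hmul]
  exact setLIntegral_congr_fun measurableSet_Ioo fun r _ =>
    lintegral_const_mul' _ _ ENNReal.ofReal_ne_top

theorem lintegral_Ioo_zero_one_pow (n : ℕ) :
    ∫⁻ r in Ioo (0 : ℝ) 1, ENNReal.ofReal (r ^ n) = ENNReal.ofReal (1 / (n + 1)) := by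
  rw [← ofReal_integral_eq_lintegral_ofReal, ← integral_Ioc_eq_integral_Ioo,
    ← intervalIntegral.integral_of_le zero_le_one, integral_pow]
  · simp
  · exact (continuous_pow n).integrableOn_Icc.mono_set Ioo_subset_Icc_self
  · exact (ae_restrict_iff' measurableSet_Ioo).mpr (ae_of_all _ fun r hr => by
      have := hr.1.le; positivity)

theorem lintegral_Ioo_zero_one_mul_tsum_pow {c : ℕ → ℝ} (hc : ∀ n, 0 ≤ c n) :
    ∫⁻ r in Ioo (0 : ℝ) 1, ENNReal.ofReal r * ∑' n, ENNReal.ofReal (c n * r ^ (2 * n)) =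
      ∑' n, ENNReal.ofReal (c n / (2 * (n + 1))) := by
  calc _ = ∫⁻ r in Ioo (0 : ℝ) 1,
        ∑' n, ENNReal.ofReal (c n) * ENNReal.ofReal (r ^ (2 * n + 1)) := by
        refine setLIntegral_congr_fun measurableSet_Ioo fun r hr => ?_
        rw [← ENNReal.tsum_mul_left]
        refine tsum_congr fun n => ?_
        rw [← ENNReal.ofReal_mul hr.1.le, ← ENNReal.ofReal_mul (hc n)]
        congr 1
        ring
    _ = ∑' n, ENNReal.ofReal (c n / (2 * (n + 1))) := by
        rw [lintegral_tsum fun n => by fun_prop]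
        refine tsum_congr fun n => ?_
        rw [lintegral_const_mul' _ _ ENNReal.ofReal_ne_top, lintegral_Ioo_zero_one_pow,
          ← ENNReal.ofReal_mul (hc n)]
        congr 1
        push_cast
        ring

theorem AEMeasurable.comp_polarCoord_symm_of_hasSum_pow {a : ℕ → ℂ} {f : ℂ → ℂ} {R : ℝ}
    (hf : ∀ z ∈ ball (0 : ℂ) R, HasSum (fun n => a n * z ^ n) (f z)) :
    AEMeasurable (f ∘ Complex.polarCoord.symm) (volume.restrict (Ioo 0 R ×ˢ Ioo (-π) π)) :=
  aemeasurable_of_hasSum (fun n => by fun_prop) <|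
    ae_restrict_of_forall_mem (measurableSet_Ioo.prod measurableSet_Ioo) fun p hp =>
      hf _ (by simpa [abs_of_pos hp.1.1] using hp.1.2)

/-- Plancherel-type identity on the disc: if `f(z) = ∑ aₙ zⁿ` on `𝔻`, then
`∫_𝔻 |f|² dA = π ∑ |aₙ|²/(n+1)`, with both sides possibly infinite. -/
theorem bergman_norm_of_power_series (f : ℂ → ℂ) (a : ℕ → ℂ)
    (hf : ∀ z ∈ ball (0 : ℂ) 1, HasSum (fun n : ℕ => a n * z ^ n) (f z)) :
    ∫⁻ z in ball (0 : ℂ) 1, ENNReal.ofReal (‖f z‖ ^ 2) =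
      ENNReal.ofReal Real.pi * ∑' n : ℕ, ENNReal.ofReal (‖a n‖ ^ 2 / (n + 1)) := by
  calc ∫⁻ z in ball (0 : ℂ) 1, ENNReal.ofReal (‖f z‖ ^ 2)
      = ∫⁻ r in Ioo 0 1, ENNReal.ofReal r *
          ∫⁻ θ in Ioo (-π) π, ENNReal.ofReal (‖f (Complex.polarCoord.symm (r, θ))‖ ^ 2) :=
        lintegral_ball_zero_eq_lintegral_lintegral_polarCoord
          (g := fun z => ENNReal.ofReal (‖f z‖ ^ 2))
          ((AEMeasurable.comp_polarCoord_symm_of_hasSum_pow hf).norm.pow_const 2).ennreal_ofReal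
    _ = ENNReal.ofReal (2 * π) * ∫⁻ r in Ioo 0 1, ENNReal.ofReal r *
          ∑' n, ENNReal.ofReal (‖a n‖ ^ 2 * r ^ (2 * n)) := by
        rw [← lintegral_const_mul' _ _ ENNReal.ofReal_ne_top]
        refine setLIntegral_congr_fun measurableSet_Ioo fun r hr => ?_
        rw [lintegral_norm_sq_polarCoord_symm_of_hasSum_pow hr.1.le
          (summable_norm_mul_pow_of_hasSum_on_ball hf hr.1.le hr.2)
          fun z hz => hf z (by simpa [hz] using hr.2), mul_left_comm]
    _ = ENNReal.ofReal π * ∑' n, ENNReal.ofReal (‖a n‖ ^ 2 / (n + 1)) := by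
        rw [lintegral_Ioo_zero_one_mul_tsum_pow fun n => by positivity, ← ENNReal.tsum_mul_left,
          ← ENNReal.tsum_mul_left]
        congr 1 with n
        rw [← ENNReal.ofReal_mul (by positivity), ← ENNReal.ofReal_mul Real.pi_pos.le]
        congr 1
        field_simp
end

section
/- Reproducing property of the Bergman kernel of the disc: for every holomorphic $f \in L^2(\mathbb{D})$ and every $z \in \mathbb{D}$, $f(z) = \int_{\mathbb{D}} \frac{f(w)}{\pi (1 - z\overline{w})^2}\, dA(w)$. -/
open MeasureTheory Metric Complex

/-!
On the circle `‖w‖ = r` one has `conj w = r ^ 2 / w`, so the Bergman integrand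
`f w / (π (1 - z conj w) ^ 2)` equals `w ^ 2 f w / (π (w - r ^ 2 z) ^ 2)`, and Cauchy's formula for
the derivative gives its circle average as `(w f w)' (r ^ 2 z) / π`. Integrating in polar
coordinates, the integral over the disc of radius `ρ < 1` is
`∫₀^ρ 2 r (w f w)' (r ^ 2 z) dr = ρ ^ 2 f (ρ ^ 2 z)`. As `ρ → 1` the right side tends to `f z`,
and the left side to the integral over the unit disc, since `f ∈ L² ⊆ L¹` there and the kernel is
bounded for fixed `z`.
-/

open Set Filter Topology
open scoped Real ComplexConjugate

theorem polarCoord_symm_eq_circleMap (p : ℝ × ℝ) :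
    Complex.polarCoord.symm p = circleMap 0 p.1 p.2 := by
  simp [Complex.polarCoord_symm_apply, circleMap, exp_mul_I]

theorem setIntegral_ball_eq_setIntegral_polarCoord {E : Type*} [NormedAddCommGroup E]
    [NormedSpace ℝ E] (G : ℂ → E) (ρ : ℝ) :
    ∫ w in ball (0 : ℂ) ρ, G w =
      ∫ p in Ioo 0 ρ ×ˢ Ioo (-π) π, p.1 • G (circleMap 0 p.1 p.2) := by
  have htarget : polarCoord.target ∩ Iio ρ ×ˢ univ = Ioo 0 ρ ×ˢ Ioo (-π) π := by
    ext ⟨r, θ⟩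
    simp only [polarCoord_target, mem_inter_iff, mem_prod, mem_Ioi, mem_Ioo, mem_Iio, mem_univ]
    tauto
  rw [← integral_indicator measurableSet_ball, ← Complex.integral_comp_polarCoord_symm,
    ← htarget, ← setIntegral_indicator (measurableSet_Iio.prod MeasurableSet.univ)]
  refine setIntegral_congr_fun (by rw [polarCoord_target]; measurability) fun p hp ↦ ?_
  have hr : 0 < p.1 := hp.1
  simp only [indicator, mem_ball, dist_zero_right, mem_prod, mem_Iio, mem_univ, and_true,
    polarCoord_symm_eq_circleMap, norm_circleMap_zero, abs_of_pos hr, smul_ite, smul_zero]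

theorem setIntegral_ball_eq_integral_circleAverage {E : Type*} [NormedAddCommGroup E]
    [NormedSpace ℝ E] [CompleteSpace E] {G : ℂ → E} {ρ : ℝ} (hρ : 0 ≤ ρ)
    (hG : ContinuousOn G (closedBall 0 ρ)) :
    ∫ w in ball (0 : ℂ) ρ, G w = ∫ r in 0..ρ, (2 * π * r) • Real.circleAverage G 0 r := by
  have hint : IntegrableOn (fun p : ℝ × ℝ ↦ p.1 • G (circleMap 0 p.1 p.2))
      (Ioo 0 ρ ×ˢ Ioo (-π) π) := by
    refine (ContinuousOn.integrableOn_compact (isCompact_Icc.prod isCompact_Icc) ?_).mono_set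
      (prod_mono Ioo_subset_Icc_self Ioo_subset_Icc_self)
    refine continuousOn_fst.smul (hG.comp (by fun_prop) fun p hp ↦ ?_)
    simp [abs_of_nonneg hp.1.1, hp.1.2]
  rw [setIntegral_ball_eq_setIntegral_polarCoord, Measure.volume_eq_prod, setIntegral_prod _ hint,
    intervalIntegral.integral_of_le hρ, integral_Ioc_eq_integral_Ioo]
  refine setIntegral_congr_fun measurableSet_Ioo fun r _ ↦ ?_
  have hper : Function.Periodic (fun θ ↦ G (circleMap 0 r θ)) (2 * π) := fun θ ↦ by
    simp [periodic_circleMap 0 r θ]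
  have hshift := hper.intervalIntegral_add_eq (-π) 0
  rw [show -π + 2 * π = π by ring, zero_add] at hshift
  rw [integral_smul, ← integral_Ioc_eq_integral_Ioo,
    ← intervalIntegral.integral_of_le (by linarith [Real.pi_pos]), hshift,
    Real.circleAverage_def, smul_smul]
  congr 1
  field_simp

theorem tendsto_setIntegral_ball_nhdsLT {X E : Type*} [PseudoMetricSpace X] [MeasurableSpace X]
    [OpensMeasurableSpace X] [NormedAddCommGroup E] [NormedSpace ℝ E] {μ : Measure X}
    {G : X → E} {c : X} {R : ℝ} (hG : IntegrableOn G (ball c R) μ) :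
    Tendsto (fun ρ ↦ ∫ x in ball c ρ, G x ∂μ) (𝓝[<] R) (𝓝 (∫ x in ball c R, G x ∂μ)) := by
  have hrestrict : ∀ᶠ ρ in 𝓝[<] R,
      ∫ x in ball c R, (ball c ρ).indicator G x ∂μ = ∫ x in ball c ρ, G x ∂μ :=
    eventually_nhdsWithin_of_forall fun ρ hρ ↦ by
      rw [setIntegral_indicator measurableSet_ball,
        inter_eq_right.2 (ball_subset_ball (le_of_lt hρ))]
  refine Tendsto.congr' hrestrict (tendsto_integral_filter_of_dominated_convergence (‖G ·‖)
    (Eventually.of_forall fun ρ ↦ hG.1.indicator measurableSet_ball)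
    (Eventually.of_forall fun ρ ↦ Eventually.of_forall fun x ↦ norm_indicator_le_norm_self _ _)
    hG.norm (ae_restrict_of_forall_mem measurableSet_ball fun x hx ↦ ?_))
  refine tendsto_const_nhds.congr' ?_
  filter_upwards [nhdsWithin_le_nhds (eventually_gt_nhds (mem_ball.1 hx))] with ρ hρ
  exact (indicator_of_mem (mem_ball.2 hρ) G).symm

theorem conj_eq_sq_div_of_mem_sphere {w : ℂ} {r : ℝ} (hw : w ∈ sphere (0 : ℂ) r) (hr : r ≠ 0) :
    conj w = r ^ 2 / w := by
  have hw0 : w ≠ 0 := ne_zero_of_mem_sphere hr ⟨w, hw⟩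
  rw [eq_div_iff hw0, mul_comm, mul_conj', mem_sphere_zero_iff_norm.1 hw]

noncomputable def bergmanKernel (z w : ℂ) : ℂ := ((π : ℂ) * (1 - z * conj w) ^ 2)⁻¹

theorem one_sub_mul_conj_ne_zero {z w : ℂ} (hz : ‖z‖ < 1) (hw : ‖w‖ ≤ 1) :
    1 - z * conj w ≠ 0 := by
  rw [sub_ne_zero]
  intro h
  have : ‖z * conj w‖ < 1 := by
    rw [norm_mul, norm_conj]
    nlinarith [norm_nonneg z, norm_nonneg w]
  simp [← h] at this

theorem continuousOn_bergmanKernel {z : ℂ} (hz : z ∈ ball (0 : ℂ) 1) :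
    ContinuousOn (bergmanKernel z) (closedBall 0 1) :=
  ContinuousOn.inv₀ (by fun_prop) fun w hw ↦ mul_ne_zero (by simp [Real.pi_ne_zero])
    (pow_ne_zero 2 (one_sub_mul_conj_ne_zero (by simpa using hz) (by simpa using hw)))

theorem integrableOn_mul_bergmanKernel {f : ℂ → ℂ}
    (hf : MemLp f 2 (volume.restrict (ball (0 : ℂ) 1))) {z : ℂ} (hz : z ∈ ball (0 : ℂ) 1) :
    IntegrableOn (fun w ↦ f w * bergmanKernel z w) (ball 0 1) :=
  have : IsFiniteMeasure (volume.restrict (ball (0 : ℂ) 1)) :=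
    isFiniteMeasure_restrict.2 measure_ball_lt_top.ne
  IntegrableOn.mul_continuousOn_of_subset (hf.integrable one_le_two)
    (continuousOn_bergmanKernel hz) measurableSet_ball (isCompact_closedBall 0 1)
    ball_subset_closedBall

theorem circleAverage_mul_bergmanKernel {f : ℂ → ℂ} (hf : DifferentiableOn ℂ f (ball 0 1))
    {z : ℂ} (hz : z ∈ ball (0 : ℂ) 1) {r : ℝ} (hr0 : 0 < r) (hr1 : r < 1) :
    Real.circleAverage (fun w ↦ f w * bergmanKernel z w) 0 r =
      (π : ℂ)⁻¹ * deriv (fun w ↦ w * f w) (r ^ 2 * z) := by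
  have ha : (r : ℂ) ^ 2 * z ∈ ball (0 : ℂ) r := by
    have : r * ‖z‖ < 1 := by nlinarith [norm_nonneg z, mem_ball_zero_iff.1 hz]
    rw [mem_ball_zero_iff, norm_mul, norm_pow, norm_real, Real.norm_of_nonneg hr0.le]
    nlinarith
  have hg : DifferentiableOn ℂ (fun w ↦ w * f w) (ball 0 1) := differentiableOn_id.mul hf
  have hcauchy := two_pi_I_inv_smul_circleIntegral_sub_sq_inv_smul_of_differentiable isOpen_ball
    (closedBall_subset_ball hr1) hg ha
  have hpt : EqOn (fun w ↦ (w - 0)⁻¹ • (f w * bergmanKernel z w))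
      (fun w ↦ (π : ℂ)⁻¹ • ((w - r ^ 2 * z) ^ 2)⁻¹ • (w * f w)) (sphere 0 r) := fun w hw ↦ by
    have hw0 : w ≠ 0 := ne_zero_of_mem_sphere hr0.ne' ⟨w, hw⟩
    simp only [bergmanKernel, conj_eq_sq_div_of_mem_sphere hw hr0.ne', smul_eq_mul, sub_zero]
    field_simp
  rw [Real.circleAverage_eq_circleIntegral hr0.ne', circleIntegral.integral_congr hr0.le hpt,
    circleIntegral.integral_smul, smul_comm, hcauchy, smul_eq_mul]

theorem hasDerivAt_sq_mul_comp_sq_mul {f : ℂ → ℂ} {z : ℂ} {t : ℝ}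
    (hf : DifferentiableAt ℂ f (t ^ 2 * z)) :
    HasDerivAt (fun s : ℝ ↦ (s : ℂ) ^ 2 * f ((s : ℂ) ^ 2 * z))
      (2 * t * deriv (fun w ↦ w * f w) (t ^ 2 * z)) t := by
  have hsq : HasDerivAt (fun s : ℂ ↦ s ^ 2) (2 * t) t := by simpa using hasDerivAt_pow 2 (t : ℂ)
  have hg : HasDerivAt (fun w ↦ w * f w) (1 * f (t ^ 2 * z) + t ^ 2 * z * deriv f (t ^ 2 * z))
      (t ^ 2 * z) := (hasDerivAt_id _).mul hf.hasDerivAt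
  have hcomp : HasDerivAt (fun s : ℂ ↦ f (s ^ 2 * z)) (deriv f (t ^ 2 * z) * (2 * t * z)) t :=
    hf.hasDerivAt.comp (t : ℂ) (hsq.mul_const z)
  rw [hg.deriv]
  convert (hsq.fun_mul hcomp).comp_ofReal using 1
  ring

theorem integral_two_mul_deriv_mul_self {f : ℂ → ℂ} (hf : DifferentiableOn ℂ f (ball 0 1))
    {z : ℂ} (hz : z ∈ ball (0 : ℂ) 1) {ρ : ℝ} (hρ0 : 0 ≤ ρ) (hρ1 : ρ ≤ 1) :
    ∫ r in 0..ρ, 2 * (r : ℂ) * deriv (fun w ↦ w * f w) (r ^ 2 * z) = ρ ^ 2 * f (ρ ^ 2 * z) := by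
  have hmaps : MapsTo (fun t : ℝ ↦ (t : ℂ) ^ 2 * z) (uIcc 0 ρ) (ball 0 1) := fun t ht ↦ by
    rw [uIcc_of_le hρ0] at ht
    have : t ^ 2 ≤ 1 := by nlinarith [ht.1, ht.2]
    rw [mem_ball_zero_iff, norm_mul, norm_pow, norm_real, Real.norm_eq_abs, sq_abs]
    nlinarith [norm_nonneg z, mem_ball_zero_iff.1 hz]
  have hderiv : ContinuousOn (deriv fun w ↦ w * f w) (ball 0 1) :=
    ((differentiableOn_id.mul hf).analyticOnNhd isOpen_ball).deriv.continuousOn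
  rw [intervalIntegral.integral_eq_sub_of_hasDerivAt (fun t ht ↦ hasDerivAt_sq_mul_comp_sq_mul
      (hf.differentiableAt (isOpen_ball.mem_nhds (hmaps ht))))
    (ContinuousOn.intervalIntegrable (by fun_prop))]
  simp

theorem setIntegral_ball_mul_bergmanKernel {f : ℂ → ℂ} (hf : DifferentiableOn ℂ f (ball 0 1))
    {z : ℂ} (hz : z ∈ ball (0 : ℂ) 1) {ρ : ℝ} (hρ : ρ ∈ Ioo 0 1) :
    ∫ w in ball 0 ρ, f w * bergmanKernel z w = ρ ^ 2 * f (ρ ^ 2 * z) := by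
  have hcont : ContinuousOn (fun w ↦ f w * bergmanKernel z w) (closedBall 0 ρ) :=
    (hf.continuousOn.mul ((continuousOn_bergmanKernel hz).mono ball_subset_closedBall)).mono
      (closedBall_subset_ball hρ.2)
  rw [setIntegral_ball_eq_integral_circleAverage hρ.1.le hcont,
    ← integral_two_mul_deriv_mul_self hf hz hρ.1.le hρ.2.le]
  refine intervalIntegral.integral_congr_ae (Eventually.of_forall fun r hr ↦ ?_)
  rw [uIoc_of_le hρ.1.le] at hr
  rw [circleAverage_mul_bergmanKernel hf hz hr.1 (hr.2.trans_lt hρ.2), real_smul]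
  field_simp
  push_cast
  ring

/-- Reproducing property of the Bergman kernel of the disc. -/
theorem bergman_reproducing_disc (f : ℂ → ℂ)
    (hf : DifferentiableOn ℂ f (ball (0 : ℂ) 1))
    (hf2 : MemLp f 2 (volume.restrict (ball (0 : ℂ) 1)))
    (z : ℂ) (hz : z ∈ ball (0 : ℂ) 1) :
    f z = ∫ w in ball (0 : ℂ) 1,
        f w / ((Real.pi : ℂ) * (1 - z * (starRingEnd ℂ) w) ^ 2) := by
  show f z = ∫ w in ball 0 1, f w * bergmanKernel z w
  have hdisc : (fun ρ : ℝ ↦ ∫ w in ball 0 ρ, f w * bergmanKernel z w)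
      =ᶠ[𝓝[<] 1] fun ρ ↦ ρ ^ 2 * f (ρ ^ 2 * z) :=
    eventually_of_mem (Ioo_mem_nhdsLT zero_lt_one) fun ρ hρ ↦
      setIntegral_ball_mul_bergmanKernel hf hz hρ
  have hradial : Tendsto (fun ρ : ℝ ↦ (ρ : ℂ) ^ 2 * f (ρ ^ 2 * z)) (𝓝[<] 1) (𝓝 (f z)) := by
    have hsq : Tendsto (fun ρ : ℝ ↦ (ρ : ℂ) ^ 2) (𝓝[<] 1) (𝓝 1) :=
      ((continuous_ofReal.pow 2).tendsto' 1 1 (by simp)).mono_left nhdsWithin_le_nhds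
    have hfz : ContinuousAt f (1 * z) := by
      rw [one_mul]
      exact hf.continuousOn.continuousAt (isOpen_ball.mem_nhds hz)
    simpa using hsq.mul (hfz.tendsto.comp (hsq.mul_const z))
  exact tendsto_nhds_unique hradial
    ((tendsto_setIntegral_ball_nhdsLT (integrableOn_mul_bergmanKernel hf2 hz)).congr' hdisc)
end
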